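/- Let $q = p^k$ with $k \geq 1$, and let $n \leq q$ be a positive integer. Then for every matrix $A$ in the group $\mathbb{U}_{n+1}$ of upper unitriangular $(n+1)\times(n+1)$ matrices over $\mathbb{F}_p$, the power $A^q$ lies in the center of $\mathbb{U}_{n+1}$. -/

import Mathlib

/-!
Write `A = 1 + N` with `N` strictly upper triangular and let `q = p ^ k`. In characteristic `p`
the map `x ↦ x ^ q` is additive on commuting elements, so `A ^ q = 1 + N ^ q`. Each factor of
`N` pushes the nonzero entries one step further above the diagonal, so once `n ≤ q` the matrix
`N ^ q` can only be nonzero at the corner `(0, n)`, and a multiple of that matrix unit commutes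
with every unitriangular matrix.
-/

namespace Matrix

variable {R : Type*}

theorem sub_one_apply_eq_zero_of_le [Ring R] {n : ℕ} {A : Matrix (Fin n) (Fin n) R}
    (hA1 : ∀ i, A i i = 1) (hA0 : A.BlockTriangular id) (i j : Fin n) (hji : j ≤ i) :
    (A - 1) i j = 0 := by
  rcases hji.lt_or_eq with hji | rfl
  · simp [hA0 hji, one_apply_ne (Fin.ne_of_gt hji)]
  · simp [hA1]

theorem pow_apply_eq_zero_of_lt_add [Semiring R] {n : ℕ} {N : Matrix (Fin n) (Fin n) R}
    (hN : ∀ i j, j ≤ i → N i j = 0) (m : ℕ) {i j : Fin n} (hij : (j : ℕ) < i + m) :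
    (N ^ m) i j = 0 := by
  induction m generalizing i with
  | zero => exact one_apply_ne (Fin.ne_of_gt hij)
  | succ m ih =>
    rw [pow_succ', mul_apply]
    refine Finset.sum_eq_zero fun x _ => ?_
    rcases le_or_gt x i with hxi | hix
    · rw [hN i x hxi, zero_mul]
    · rw [ih (by omega), mul_zero]

theorem pow_eq_single_zero_last [Semiring R] {n m : ℕ} (hnm : n ≤ m)
    {N : Matrix (Fin (n + 1)) (Fin (n + 1)) R} (hN : ∀ i j, j ≤ i → N i j = 0) :
    N ^ m = single 0 (Fin.last n) ((N ^ m) 0 (Fin.last n)) := by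
  ext i j
  by_cases hcorner : 0 = i ∧ Fin.last n = j
  · obtain ⟨rfl, rfl⟩ := hcorner
    simp
  · rw [single_apply_of_ne _ _ _ _ _ hcorner]
    refine pow_apply_eq_zero_of_lt_add hN m ?_
    have := j.is_le
    rw [Fin.ext_iff, Fin.ext_iff, Fin.val_zero, Fin.val_last] at hcorner
    omega

theorem commute_single_zero_last [Semiring R] {n : ℕ} {B : Matrix (Fin (n + 1)) (Fin (n + 1)) R}
    (hB1 : ∀ i, B i i = 1) (hB0 : B.BlockTriangular id) (c : R) :
    Commute (single 0 (Fin.last n) c) B := by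
  have hlast : ∀ j, j ≠ Fin.last n → B (Fin.last n) j = 0 :=
    fun j hj => hB0 (Fin.lt_last_iff_ne_last.mpr hj)
  have hzero : ∀ i, i ≠ 0 → B i 0 = 0 := fun i hi => hB0 (Fin.pos_iff_ne_zero.mpr hi)
  have hleft : single (0 : Fin (n + 1)) (Fin.last n) c * B = single 0 (Fin.last n) c := by
    ext i j
    obtain rfl | hi := eq_or_ne i 0
    · obtain rfl | hj := eq_or_ne j (Fin.last n)
      · simp [hB1]
      · simp [hlast j hj, single_apply_of_col_ne _ _ hj.symm]
    · simp [single_mul_apply_of_ne _ _ _ _ _ hi, single_apply_of_row_ne hi.symm]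
  have hright : B * single (0 : Fin (n + 1)) (Fin.last n) c = single 0 (Fin.last n) c := by
    ext i j
    obtain rfl | hj := eq_or_ne j (Fin.last n)
    · obtain rfl | hi := eq_or_ne i 0
      · simp [hB1]
      · simp [hzero i hi, single_apply_of_row_ne hi.symm]
    · simp [mul_single_apply_of_ne _ _ _ _ _ hj, single_apply_of_col_ne _ _ hj.symm]
  exact hleft.trans hright.symm

end Matrix

theorem unitriangular_pow_q_central_general {p n k : ℕ} (hp : p.Prime)
    (hnq : n ≤ p ^ k)
    (A : Matrix (Fin (n + 1)) (Fin (n + 1)) (ZMod p))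
    (hA1 : ∀ i, A i i = 1) (hA0 : ∀ i j : Fin (n + 1), (j : ℕ) < (i : ℕ) → A i j = 0) :
    ∀ B : Matrix (Fin (n + 1)) (Fin (n + 1)) (ZMod p),
      ((∀ i, B i i = 1) ∧ ∀ i j : Fin (n + 1), (j : ℕ) < (i : ℕ) → B i j = 0) →
      A ^ (p ^ k) * B = B * A ^ (p ^ k) := by
  rintro B ⟨hB1, hB0⟩
  have := Fact.mk hp
  have hfrob : A ^ p ^ k = (A - 1) ^ p ^ k + 1 := by
    simpa using add_pow_char_pow_of_commute p k (Commute.one_right (A - 1))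
  rw [hfrob, Matrix.pow_eq_single_zero_last hnq
    (Matrix.sub_one_apply_eq_zero_of_le hA1 fun i j h => hA0 i j h)]
  exact ((Matrix.commute_single_zero_last hB1 (fun i j h => hB0 i j h) _).add_left
    (Commute.one_left B)).eq

/-- If `q = p^k` with `k ≥ 1` and `n ≤ q`, then for every upper unitriangular
`(n+1) × (n+1)` matrix `A` over `𝔽_p`, the power `A^q` lies in the center of the
group of upper unitriangular matrices. -/
theorem unitriangular_pow_q_central {p n k : ℕ} (hp : p.Prime) (hk : 1 ≤ k)
    (hn : 1 ≤ n) (hnq : n ≤ p ^ k)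
    (A : Matrix (Fin (n + 1)) (Fin (n + 1)) (ZMod p))
    (hA1 : ∀ i, A i i = 1) (hA0 : ∀ i j : Fin (n + 1), (j : ℕ) < (i : ℕ) → A i j = 0) :
    ∀ B : Matrix (Fin (n + 1)) (Fin (n + 1)) (ZMod p),
      ((∀ i, B i i = 1) ∧ ∀ i j : Fin (n + 1), (j : ℕ) < (i : ℕ) → B i j = 0) →
      A ^ (p ^ k) * B = B * A ^ (p ^ k) :=
  unitriangular_pow_q_central_general hp hnq A hA1 hA0
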